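/- arXiv:2604.21745 — 2 statements merged into one kernel-verified Lean document; each statement's English description precedes it below -/
import Mathlib

section
/- Let F and G be CDFs of real-valued probability measures with generalized inverse (quantile) functions Q_F and Q_G, and let U be uniformly distributed on (0,1). Then the pair (X,Y) = (Q_F(U), Q_G(U)) has joint CDF equal to H_1(x,y) = min{F(x), G(y)}, and X has CDF F, Y has CDF G. -/
open MeasureTheory Set

/-- Generalized quantile (inverse CDF): `Q_F(u) = inf {x | F x ≥ u}`. -/
noncomputable def quantile (F : ℝ → ℝ) (u : ℝ) : ℝ := sInf {x | u ≤ F x}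

/-- CDF of a real random variable `X` under `P`. -/
noncomputable def cdfRV {Ω : Type*} [MeasurableSpace Ω] (P : Measure Ω) (X : Ω → ℝ) (x : ℝ) : ℝ :=
  (P {ω | X ω ≤ x}).toReal

/-- CDF of a measure on ℝ. -/
noncomputable def cdfOf (μ : Measure ℝ) (x : ℝ) : ℝ := (μ (Iic x)).toReal

/-- Uniform distribution on (0,1). -/
noncomputable def unif : Measure ℝ := volume.restrict (Ioo 0 1)

/-- 1-Wasserstein distance on ℝ: infimum over couplings of the expected distance. -/
noncomputable def W1 (μ ν : Measure ℝ) : ENNReal :=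
  ⨅ π ∈ {π : Measure (ℝ × ℝ) | π.map Prod.fst = μ ∧ π.map Prod.snd = ν},
    ∫⁻ p, ENNReal.ofReal |p.1 - p.2| ∂π

/-!
For `u ∈ (0, 1)` right continuity of a CDF `F` gives `Q_F u ≤ x ↔ u ≤ F x`. Hence, almost surely,
`Q_F U ≤ x ∧ Q_G U ≤ y ↔ U ≤ min (F x) (G y)`, an event of probability `min (F x) (G y)` since `U`
is uniform; the marginal statements are the same computation with one condition.
-/

open Filter ProbabilityTheory

-- Right continuity puts the infimum of the up-set `{x | u ≤ F x}` inside it.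
theorem StieltjesFunction.quantile_le_iff (F : StieltjesFunction ℝ) {u x : ℝ}
    (hbot : ∃ z, F z < u) (htop : ∃ z, u ≤ F z) : quantile F u ≤ x ↔ u ≤ F x := by
  set S := {x | u ≤ F x}
  have hbdd : BddBelow S := by
    obtain ⟨z, hz⟩ := hbot
    exact ⟨z, fun s hs => le_of_not_gt fun hsz => hz.not_ge (le_trans hs (F.mono hsz.le))⟩
  have hmem : sInf S ∈ S := by
    have hright : ∀ t ∈ Ioi (sInf S), u ≤ F t := fun t ht => by
      obtain ⟨s, hs, hst⟩ := exists_lt_of_csInf_lt htop ht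
      exact le_trans hs (F.mono hst.le)
    exact ge_of_tendsto ((F.right_continuous _).mono Ioi_subset_Ici_self)
      (eventually_nhdsWithin_of_forall hright)
  exact ⟨fun h => hmem.trans (F.mono h), fun h => csInf_le hbdd h⟩

section CdfOf

variable (μ : Measure ℝ) [IsProbabilityMeasure μ]

theorem cdfOf_eq_cdf : cdfOf μ = cdf μ := by
  funext x
  rw [cdfOf, cdf_eq_real, measureReal_def]

theorem cdfOf_mem_Icc (x : ℝ) : cdfOf μ x ∈ Icc 0 1 := by
  rw [cdfOf_eq_cdf]
  exact ⟨cdf_nonneg μ x, cdf_le_one μ x⟩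

theorem quantile_cdfOf_le_iff {u x : ℝ} (hu : u ∈ Ioo 0 1) :
    quantile (cdfOf μ) u ≤ x ↔ u ≤ cdfOf μ x := by
  rw [cdfOf_eq_cdf]
  exact (cdf μ).quantile_le_iff
    ((tendsto_cdf_atBot μ).eventually (eventually_lt_nhds hu.1)).exists
    ((tendsto_cdf_atTop μ).eventually (eventually_ge_nhds hu.2)).exists

end CdfOf

theorem unif_Iic {m : ℝ} (hm : m ∈ Icc 0 1) : unif (Iic m) = ENNReal.ofReal m := by
  rw [unif, Measure.restrict_apply measurableSet_Iic]
  refine le_antisymm ?_ ?_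
  · calc volume (Iic m ∩ Ioo 0 1) ≤ volume (Ioc 0 m) :=
          measure_mono fun t ht => ⟨ht.2.1, ht.1⟩
      _ = ENNReal.ofReal m := by rw [Real.volume_Ioc, sub_zero]
  · calc ENNReal.ofReal m = volume (Ioo 0 m) := by rw [Real.volume_Ioo, sub_zero]
      _ ≤ volume (Iic m ∩ Ioo 0 1) :=
          measure_mono fun t ht => ⟨ht.2.le, ht.1, ht.2.trans_le hm.2⟩

section UniformVariable

variable {Ω : Type*} [MeasurableSpace Ω] {P : Measure Ω} {U : Ω → ℝ}

theorem ae_mem_Ioo_of_map_eq_unif (hU : Measurable U) (hUnif : P.map U = unif) :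
    ∀ᵐ ω ∂P, U ω ∈ Ioo 0 1 :=
  ae_of_ae_map hU.aemeasurable (hUnif ▸ ae_restrict_mem measurableSet_Ioo)

theorem toReal_measure_setOf_le_of_map_eq_unif (hU : Measurable U) (hUnif : P.map U = unif)
    {m : ℝ} (hm : m ∈ Icc 0 1) : (P {ω | U ω ≤ m}).toReal = m := by
  change (P (U ⁻¹' Iic m)).toReal = m
  rw [← Measure.map_apply hU measurableSet_Iic, hUnif, unif_Iic hm, ENNReal.toReal_ofReal hm.1]

theorem setOf_quantile_cdfOf_le_ae_eq (hU : ∀ᵐ ω ∂P, U ω ∈ Ioo 0 1) (μ : Measure ℝ)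
    [IsProbabilityMeasure μ] (x : ℝ) :
    {ω | quantile (cdfOf μ) (U ω) ≤ x} =ᵐ[P] {ω | U ω ≤ cdfOf μ x} := by
  filter_upwards [hU] with ω hω
  exact propext (quantile_cdfOf_le_iff μ hω)

end UniformVariable

theorem comonotone_coupling_cdf_general {Ω : Type*} [MeasurableSpace Ω] (P : Measure Ω)
    (μ ν : Measure ℝ) [IsProbabilityMeasure μ] [IsProbabilityMeasure ν]
    (U : Ω → ℝ) (hU : Measurable U) (hUnif : P.map U = unif) :
    (∀ x y : ℝ,
      (P {ω | quantile (cdfOf μ) (U ω) ≤ x ∧ quantile (cdfOf ν) (U ω) ≤ y}).toReal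
        = min (cdfOf μ x) (cdfOf ν y)) ∧
    (∀ x : ℝ, cdfRV P (fun ω => quantile (cdfOf μ) (U ω)) x = cdfOf μ x) ∧
    (∀ y : ℝ, cdfRV P (fun ω => quantile (cdfOf ν) (U ω)) y = cdfOf ν y) := by
  have hQ := setOf_quantile_cdfOf_le_ae_eq (ae_mem_Ioo_of_map_eq_unif hU hUnif)
  have hU_le : ∀ m ∈ Icc (0 : ℝ) 1, (P {ω | U ω ≤ m}).toReal = m :=
    fun _ hm => toReal_measure_setOf_le_of_map_eq_unif hU hUnif hm
  refine ⟨fun x y => ?_, fun x => ?_, fun y => ?_⟩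
  · have hmin : min (cdfOf μ x) (cdfOf ν y) ∈ Icc 0 1 :=
      ⟨le_min (cdfOf_mem_Icc μ x).1 (cdfOf_mem_Icc ν y).1,
        (min_le_left _ _).trans (cdfOf_mem_Icc μ x).2⟩
    rw [ofPred_and, measure_congr ((hQ μ x).inter (hQ ν y)), ← ofPred_and]
    simp only [← le_min_iff]
    exact hU_le _ hmin
  · rw [cdfRV, measure_congr (hQ μ x), hU_le _ (cdfOf_mem_Icc μ x)]
  · rw [cdfRV, measure_congr (hQ ν y), hU_le _ (cdfOf_mem_Icc ν y)]

theorem comonotone_coupling_cdf {Ω : Type*} [MeasurableSpace Ω] (P : Measure Ω)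
    [IsProbabilityMeasure P] (μ ν : Measure ℝ) [IsProbabilityMeasure μ] [IsProbabilityMeasure ν]
    (U : Ω → ℝ) (hU : Measurable U) (hUnif : P.map U = unif) :
    (∀ x y : ℝ,
      (P {ω | quantile (cdfOf μ) (U ω) ≤ x ∧ quantile (cdfOf ν) (U ω) ≤ y}).toReal
        = min (cdfOf μ x) (cdfOf ν y)) ∧
    (∀ x : ℝ, cdfRV P (fun ω => quantile (cdfOf μ) (U ω)) x = cdfOf μ x) ∧
    (∀ y : ℝ, cdfRV P (fun ω => quantile (cdfOf ν) (U ω)) y = cdfOf ν y) :=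
  comonotone_coupling_cdf_general P μ ν U hU hUnif
end

section
/- Let X and Y be integrable real-valued random variables with CDFs F_μ and F_ν respectively, defined on a common probability space. Then E|X − Y| ≥ ∫_R |F_μ(t) − F_ν(t)| dt. -/
/-!
For each `t`, `|F_X(t) - F_Y(t)| = |E (1{X ≤ t} - 1{Y ≤ t})| ≤ P ({X ≤ t} ∆ {Y ≤ t})`.
The event `{X ≤ t} ∆ {Y ≤ t}` says that `t` lies between `X` and `Y`, so by Tonelli the
integral over `t` of its probability is `E |X - Y|`.
-/

open MeasureTheory Set

open scoped ENNReal symmDiff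

theorem volume_Ici_symmDiff_Ici (a b : ℝ) :
    volume (Ici a ∆ Ici b) = ENNReal.ofReal |a - b| := by
  wlog h : a ≤ b generalizing a b
  · rw [symmDiff_comm, abs_sub_comm]
    exact this b a (le_of_not_ge h)
  rw [symmDiff_of_ge (Ici_subset_Ici.2 h), Ici_sdiff_Ici, Real.volume_Ico,
    abs_of_nonpos (sub_nonpos.2 h), neg_sub]

theorem abs_measureReal_sub_le_measureReal_symmDiff {α : Type*} [MeasurableSpace α]
    {μ : Measure α} {s t : Set α} (hs : μ s ≠ ∞) (ht : μ t ≠ ∞) :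
    |μ.real s - μ.real t| ≤ μ.real (s ∆ t) := by
  have hst := measure_symmDiff_ne_top hs ht
  rw [abs_sub_le_iff]
  constructor
  · exact (ENNReal.le_toReal_sub ht).trans (ENNReal.toReal_mono hst le_measure_symmDiff)
  · rw [symmDiff_comm] at hst ⊢
    exact (ENNReal.le_toReal_sub hs).trans (ENNReal.toReal_mono hst le_measure_symmDiff)

section

variable {Ω : Type*} [MeasurableSpace Ω] {P : Measure Ω}

theorem cdfRV_congr_ae {X X' : Ω → ℝ} (h : X =ᵐ[P] X') : cdfRV P X = cdfRV P X' := by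
  funext t
  exact congrArg ENNReal.toReal (measure_congr (h.mono fun _ hω => congrArg (· ≤ t) hω))

theorem monotone_cdfRV [IsFiniteMeasure P] (X : Ω → ℝ) : Monotone (cdfRV P X) :=
  fun _ _ hst => ENNReal.toReal_mono (measure_ne_top _ _)
    (measure_mono fun _ hω => le_trans hω hst)

theorem lintegral_measure_symmDiff_setOf_le [SFinite P] {X Y : Ω → ℝ}
    (hX : Measurable X) (hY : Measurable Y) :
    ∫⁻ t, P ({ω | X ω ≤ t} ∆ {ω | Y ω ≤ t}) = ∫⁻ ω, ENNReal.ofReal |X ω - Y ω| ∂P := by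
  set S : Set (ℝ × Ω) := {p | p.2 ∈ {ω | X ω ≤ p.1} ∆ {ω | Y ω ≤ p.1}}
  have hS : MeasurableSet S :=
    (measurableSet_le (hX.comp measurable_snd) measurable_fst).symmDiff
      (measurableSet_le (hY.comp measurable_snd) measurable_fst)
  calc ∫⁻ t, P ({ω | X ω ≤ t} ∆ {ω | Y ω ≤ t})
        = (volume.prod P) S := (Measure.prod_apply hS).symm
    _ = ∫⁻ ω, volume (Ici (X ω) ∆ Ici (Y ω)) ∂P := Measure.prod_apply_symm hS
    _ = ∫⁻ ω, ENNReal.ofReal |X ω - Y ω| ∂P := by simp only [volume_Ici_symmDiff_Ici]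

theorem integral_abs_sub_cdfRV_le [IsFiniteMeasure P] {X Y : Ω → ℝ}
    (hX : Measurable X) (hY : Measurable Y) (hXY : Integrable (fun ω => X ω - Y ω) P) :
    ∫ t, |cdfRV P X t - cdfRV P Y t| ≤ ∫ ω, |X ω - Y ω| ∂P := by
  have hcdf (t : ℝ) :
      ENNReal.ofReal |cdfRV P X t - cdfRV P Y t| ≤ P ({ω | X ω ≤ t} ∆ {ω | Y ω ≤ t}) :=
    ENNReal.ofReal_le_of_le_toReal
      (abs_measureReal_sub_le_measureReal_symmDiff (measure_ne_top _ _) (measure_ne_top _ _))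
  have hmeas : Measurable fun t => |cdfRV P X t - cdfRV P Y t| :=
    ((monotone_cdfRV X).measurable.sub (monotone_cdfRV Y).measurable).abs
  have hlayer := lintegral_measure_symmDiff_setOf_le (P := P) hX hY
  calc ∫ t, |cdfRV P X t - cdfRV P Y t|
      = (∫⁻ t, ENNReal.ofReal |cdfRV P X t - cdfRV P Y t|).toReal :=
        integral_eq_lintegral_of_nonneg_ae (.of_forall fun _ => abs_nonneg _)
          hmeas.aestronglyMeasurable
    _ ≤ (∫⁻ t, P ({ω | X ω ≤ t} ∆ {ω | Y ω ≤ t})).toReal := by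
        refine ENNReal.toReal_mono ?_ (lintegral_mono hcdf)
        rw [hlayer]
        exact hXY.abs.lintegral_lt_top.ne
    _ = (∫⁻ ω, ENNReal.ofReal |X ω - Y ω| ∂P).toReal := by rw [hlayer]
    _ = ∫ ω, |X ω - Y ω| ∂P :=
        (integral_eq_lintegral_of_nonneg_ae (.of_forall fun _ => abs_nonneg _)
          hXY.abs.aestronglyMeasurable).symm

end

theorem expectation_abs_sub_ge_cdf_integral_general {Ω : Type*} [MeasurableSpace Ω]
    (P : Measure Ω) [IsProbabilityMeasure P] (X Y : Ω → ℝ)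
    (hXi : Integrable X P) (hYi : Integrable Y P) :
    ∫ t : ℝ, |cdfRV P X t - cdfRV P Y t| ≤ ∫ ω, |X ω - Y ω| ∂P := by
  obtain ⟨X', hX', hXX'⟩ := hXi.aemeasurable
  obtain ⟨Y', hY', hYY'⟩ := hYi.aemeasurable
  have hdiff : (fun ω => X ω - Y ω) =ᵐ[P] fun ω => X' ω - Y' ω := hXX'.sub hYY'
  have habs : (fun ω => |X ω - Y ω|) =ᵐ[P] fun ω => |X' ω - Y' ω| := hdiff.fun_comp abs
  rw [cdfRV_congr_ae hXX', cdfRV_congr_ae hYY', integral_congr_ae habs]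
  exact integral_abs_sub_cdfRV_le hX' hY' ((hXi.sub hYi).congr hdiff)

theorem expectation_abs_sub_ge_cdf_integral {Ω : Type*} [MeasurableSpace Ω]
    (P : Measure Ω) [IsProbabilityMeasure P] (X Y : Ω → ℝ)
    (hX : Measurable X) (hY : Measurable Y)
    (hXi : Integrable X P) (hYi : Integrable Y P) :
    ∫ t : ℝ, |cdfRV P X t - cdfRV P Y t| ≤ ∫ ω, |X ω - Y ω| ∂P :=
  expectation_abs_sub_ge_cdf_integral_general P X Y hXi hYi
end
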